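/- arXiv:2503.19424 — 2 statements merged into one kernel-verified Lean document; each statement's English description precedes it below -/
import Mathlib

section
/- Let d¹, d⁰ ∈ ℝⁿ and ε > 0, and define f = (1/ε²)(|d¹|² d¹ - d⁰) and F_ε(v) = (1/(4ε²))(|v|²-1)². Then ⟨f, d¹ - d⁰⟩ = F_ε(d¹) - F_ε(d⁰) + (1/(2ε²))(|d¹|² + 1)|d¹ - d⁰|² + (1/(4ε²))(|d¹|² - |d⁰|²)². -/
open RealInnerProductSpace

theorem inner_norm_sq_smul_sub_sub {E : Type*} [NormedAddCommGroup E] [InnerProductSpace ℝ E]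
    (u v : E) :
    ⟪‖u‖ ^ 2 • u - v, u - v⟫
      = ((‖u‖ ^ 2 - 1) ^ 2 - (‖v‖ ^ 2 - 1) ^ 2) / 4 + (‖u‖ ^ 2 + 1) * ‖u - v‖ ^ 2 / 2
        + (‖u‖ ^ 2 - ‖v‖ ^ 2) ^ 2 / 4 := by
  rw [norm_sub_sq_real, inner_sub_left, inner_sub_right, inner_sub_right, real_inner_smul_left,
    real_inner_smul_left, real_inner_self_eq_norm_sq, real_inner_self_eq_norm_sq,
    real_inner_comm u v]
  ring

theorem penalty_splitting_identity_general {n : ℕ} (d1 d0 : EuclideanSpace ℝ (Fin n))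
    (ε : ℝ)
    (f : EuclideanSpace ℝ (Fin n))
    (hf : f = (1 / ε ^ 2) • (‖d1‖ ^ 2 • d1 - d0))
    (Fε : EuclideanSpace ℝ (Fin n) → ℝ)
    (hFε : ∀ v, Fε v = (1 / (4 * ε ^ 2)) * (‖v‖ ^ 2 - 1) ^ 2) :
    (inner ℝ f (d1 - d0) : ℝ)
      = Fε d1 - Fε d0 + (1 / (2 * ε ^ 2)) * (‖d1‖ ^ 2 + 1) * ‖d1 - d0‖ ^ 2
        + (1 / (4 * ε ^ 2)) * (‖d1‖ ^ 2 - ‖d0‖ ^ 2) ^ 2 := by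
  rw [hf, hFε, hFε, real_inner_smul_left, inner_norm_sq_smul_sub_sub]
  ring

/-- Pointwise identity for the convex-splitting treatment of the Ginzburg–Landau
penalty: with `f = (1/ε²)(|d¹|² d¹ - d⁰)` and `F_ε v = (1/(4ε²))(|v|²-1)²`,
`⟨f, d¹ - d⁰⟩ = F_ε d¹ - F_ε d⁰ + (1/(2ε²))(|d¹|²+1)|d¹-d⁰|² + (1/(4ε²))(|d¹|²-|d⁰|²)²`. -/
theorem penalty_splitting_identity {n : ℕ} (d1 d0 : EuclideanSpace ℝ (Fin n))
    (ε : ℝ) (hε : 0 < ε)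
    (f : EuclideanSpace ℝ (Fin n))
    (hf : f = (1 / ε ^ 2) • (‖d1‖ ^ 2 • d1 - d0))
    (Fε : EuclideanSpace ℝ (Fin n) → ℝ)
    (hFε : ∀ v, Fε v = (1 / (4 * ε ^ 2)) * (‖v‖ ^ 2 - 1) ^ 2) :
    (inner ℝ f (d1 - d0) : ℝ)
      = Fε d1 - Fε d0 + (1 / (2 * ε ^ 2)) * (‖d1‖ ^ 2 + 1) * ‖d1 - d0‖ ^ 2
        + (1 / (4 * ε ^ 2)) * (‖d1‖ ^ 2 - ‖d0‖ ^ 2) ^ 2 :=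
  penalty_splitting_identity_general d1 d0 ε f hf Fε hFε
end

section
/- Since ⟨f, d¹ - d⁰⟩ - (F_ε(d¹) - F_ε(d⁰)) = (1/(2ε²))(|d¹|²+1)|d¹-d⁰|² + (1/(4ε²))(|d¹|²-|d⁰|²)² ≥ 0, the semi-implicit convex-splitting treatment of the penalty term is energy-dissipative: ⟨f, d¹ - d⁰⟩ ≥ F_ε(d¹) - F_ε(d⁰). -/
open RealInnerProductSpace

theorem four_inner_norm_sq_smul_sub_sub_eq {E : Type*} [NormedAddCommGroup E]
    [InnerProductSpace ℝ E] (a b : E) :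
    4 * ⟪‖a‖ ^ 2 • a - b, a - b⟫ - ((‖a‖ ^ 2 - 1) ^ 2 - (‖b‖ ^ 2 - 1) ^ 2)
      = 2 * (‖a‖ ^ 2 + 1) * ‖a - b‖ ^ 2 + (‖a‖ ^ 2 - ‖b‖ ^ 2) ^ 2 := by
  rw [norm_sub_sq_real, inner_sub_left, inner_sub_right, inner_sub_right,
    real_inner_smul_left, real_inner_smul_left, real_inner_self_eq_norm_sq,
    real_inner_self_eq_norm_sq, real_inner_comm b a]
  ring

theorem sq_norm_sq_sub_one_sub_le_four_inner {E : Type*} [NormedAddCommGroup E]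
    [InnerProductSpace ℝ E] (a b : E) :
    (‖a‖ ^ 2 - 1) ^ 2 - (‖b‖ ^ 2 - 1) ^ 2 ≤ 4 * ⟪‖a‖ ^ 2 • a - b, a - b⟫ := by
  have h := four_inner_norm_sq_smul_sub_sub_eq a b
  have : 0 ≤ 2 * (‖a‖ ^ 2 + 1) * ‖a - b‖ ^ 2 + (‖a‖ ^ 2 - ‖b‖ ^ 2) ^ 2 := by positivity
  linarith

theorem penalty_splitting_dissipative_general {n : ℕ} (d1 d0 : EuclideanSpace ℝ (Fin n))
    (ε : ℝ)
    (f : EuclideanSpace ℝ (Fin n))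
    (hf : f = (1 / ε ^ 2) • (‖d1‖ ^ 2 • d1 - d0))
    (Fε : EuclideanSpace ℝ (Fin n) → ℝ)
    (hFε : ∀ v, Fε v = (1 / (4 * ε ^ 2)) * (‖v‖ ^ 2 - 1) ^ 2) :
    Fε d1 - Fε d0 ≤ (inner ℝ f (d1 - d0) : ℝ) := by
  calc Fε d1 - Fε d0
      = 1 / (4 * ε ^ 2) * ((‖d1‖ ^ 2 - 1) ^ 2 - (‖d0‖ ^ 2 - 1) ^ 2) := by
        rw [hFε, hFε]; ring
    _ ≤ 1 / (4 * ε ^ 2) * (4 * ⟪‖d1‖ ^ 2 • d1 - d0, d1 - d0⟫) := by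
        gcongr; exact sq_norm_sq_sub_one_sub_le_four_inner d1 d0
    _ = inner ℝ f (d1 - d0) := by
        rw [hf, real_inner_smul_left]; ring

/-- Energy dissipation of the semi-implicit convex-splitting treatment of the
penalty term: `⟨f, d¹ - d⁰⟩ ≥ F_ε(d¹) - F_ε(d⁰)`. -/
theorem penalty_splitting_dissipative {n : ℕ} (d1 d0 : EuclideanSpace ℝ (Fin n))
    (ε : ℝ) (hε : 0 < ε)
    (f : EuclideanSpace ℝ (Fin n))
    (hf : f = (1 / ε ^ 2) • (‖d1‖ ^ 2 • d1 - d0))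
    (Fε : EuclideanSpace ℝ (Fin n) → ℝ)
    (hFε : ∀ v, Fε v = (1 / (4 * ε ^ 2)) * (‖v‖ ^ 2 - 1) ^ 2) :
    Fε d1 - Fε d0 ≤ (inner ℝ f (d1 - d0) : ℝ) :=
  penalty_splitting_dissipative_general d1 d0 ε f hf Fε hFε
end
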